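/- Let k ≥ 1 be a natural number and write k = 2^a · m with m odd. Then every Sylow 2-subgroup of the generalized quaternion (dicyclic) group Q_{4k} of order 4k is isomorphic to the dicyclic group of order 2^{a+2}. -/

import Mathlib

/-!
Multiplication by `m` on exponents, `a i ↦ a (m i)` and `xa i ↦ xa (m i)`, embeds
`Q_{2^(a+2)}` into `Q_{4k}`, `k = 2^a m`; it respects `xa i * xa j = a (n + j - i)` because
it sends `n = 2^a` to `k`. Its image has order `2^(a+2)`, the full power of `2` dividing `4k`,
so it is a Sylow `2`-subgroup, and every Sylow `2`-subgroup is conjugate to it.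
-/

namespace ZMod

def mulHom (m : ℕ) {n c : ℕ} (h : n * m = c) : ZMod n →+ ZMod c :=
  lift n ⟨(AddMonoidHom.mulLeft (m : ZMod c)).comp (Int.castAddHom (ZMod c)), by
    show (m : ZMod c) * ((n : ℤ) : ZMod c) = 0
    rw [Int.cast_natCast, ← Nat.cast_mul, mul_comm, h, natCast_self]⟩

theorem mulHom_intCast (m : ℕ) {n c : ℕ} (h : n * m = c) (x : ℤ) :
    mulHom m h x = ((m * x : ℤ) : ZMod c) := by
  simp [mulHom]

theorem mulHom_natCast (m : ℕ) {n c : ℕ} (h : n * m = c) (x : ℕ) :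
    mulHom m h x = ((m * x : ℕ) : ZMod c) := by
  exact_mod_cast mulHom_intCast m h x

theorem mulHom_injective {m : ℕ} (hm : m ≠ 0) {n c : ℕ} (h : n * m = c) :
    Function.Injective (mulHom m h) := by
  rw [injective_iff_map_eq_zero]
  intro x hx
  obtain ⟨z, rfl⟩ := intCast_surjective x
  rw [mulHom_intCast, intCast_zmod_eq_zero_iff_dvd, ← h, Nat.cast_mul, mul_comm (n : ℤ),
    Int.mul_dvd_mul_iff_left (by exact_mod_cast hm)] at hx
  rwa [intCast_zmod_eq_zero_iff_dvd]

end ZMod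

namespace QuaternionGroup

def mapOfAddHom {n k : ℕ} (f : ZMod (2 * n) →+ ZMod (2 * k)) (hf : f n = k) :
    QuaternionGroup n →* QuaternionGroup k where
  toFun
    | .a i => .a (f i)
    | .xa i => .xa (f i)
  map_one' := by
    show a (f 0) = a 0
    rw [map_zero]
  map_mul' x y := by
    rcases x with i | i <;> rcases y with j | j <;>
      simp only [a_mul_a, a_mul_xa, xa_mul_a, xa_mul_xa, map_add, map_sub, hf]

theorem mapOfAddHom_injective {n k : ℕ} {f : ZMod (2 * n) →+ ZMod (2 * k)} (hf : f n = k)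
    (hfi : Function.Injective f) : Function.Injective (mapOfAddHom f hf) := by
  rintro (i | i) (j | j) h <;>
    simp only [mapOfAddHom, MonoidHom.coe_mk, OneHom.coe_mk, a.injEq, xa.injEq, reduceCtorEq] at h
  all_goals rw [hfi h]

def scaleHom (n m : ℕ) : QuaternionGroup n →* QuaternionGroup (n * m) :=
  mapOfAddHom (ZMod.mulHom m (mul_assoc 2 n m)) (by rw [ZMod.mulHom_natCast, Nat.mul_comm m n])

theorem scaleHom_injective (n : ℕ) {m : ℕ} (hm : m ≠ 0) : Function.Injective (scaleHom n m) :=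
  mapOfAddHom_injective _ (ZMod.mulHom_injective hm _)

theorem nat_card (n : ℕ) [NeZero n] : Nat.card (QuaternionGroup n) = 4 * n := by
  rw [Nat.card_eq_fintype_card, card]

end QuaternionGroup

theorem Sylow.nonempty_mulEquiv_of_injective {p : ℕ} [Fact p.Prime] {G H : Type*} [Group G]
    [Finite G] [Group H] {f : H →* G} (hf : Function.Injective f)
    (hcard : Nat.card H = p ^ (Nat.card G).factorization p) (P : Sylow p G) :
    Nonempty (P ≃* H) := by
  let e : H ≃* f.range := MonoidHom.ofInjective hf
  let S : Sylow p G := Sylow.ofCard f.range (by rw [← Nat.card_congr e.toEquiv, hcard])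
  exact ⟨(P.equiv S).trans e.symm⟩

theorem Nat.factorization_two_pow_mul_odd (a : ℕ) {m : ℕ} (hm : Odd m) :
    (2 ^ a * m).factorization 2 = a := by
  rw [Nat.factorization_mul (by positivity) (by rintro rfl; simp at hm),
    Nat.prime_two.factorization_pow]
  simp [Nat.factorization_eq_zero_of_not_dvd hm.not_two_dvd_nat]

theorem sylow_two_quaternionGroup_iso_general
    (k a m : ℕ) (hm : Odd m) (hkam : k = 2 ^ a * m)
    (P : Sylow 2 (QuaternionGroup k)) :
    Nonempty (P ≃* QuaternionGroup (2 ^ a)) := by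
  subst hkam
  have : NeZero (2 ^ a * m) := ⟨by simp [hm.pos.ne']⟩
  refine Sylow.nonempty_mulEquiv_of_injective
    (QuaternionGroup.scaleHom_injective _ hm.pos.ne') ?_ P
  rw [QuaternionGroup.nat_card, QuaternionGroup.nat_card, ← mul_assoc,
    show 4 * 2 ^ a = 2 ^ (a + 2) by ring, Nat.factorization_two_pow_mul_odd _ hm]

/-- Let `k ≥ 1` with `k = 2 ^ a * m`, `m` odd.  Every Sylow 2-subgroup of the
generalized quaternion (dicyclic) group `Q_{4k}` of order `4k` is isomorphic to the
dicyclic group of order `2 ^ (a + 2)`. -/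
theorem sylow_two_quaternionGroup_iso
    (k a m : ℕ) (hk : 1 ≤ k) (hm : Odd m) (hkam : k = 2 ^ a * m)
    (P : Sylow 2 (QuaternionGroup k)) :
    Nonempty (P ≃* QuaternionGroup (2 ^ a)) :=
  sylow_two_quaternionGroup_iso_general k a m hm hkam P
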